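/- arXiv:2305.12688 — 2 statements merged into one kernel-verified Lean document; each statement's English description precedes it below -/
import Mathlib

section
/- Let G and H be simple graphs on the same finite vertex set V with |V| ≥ 4. Then G and H are isomorphic as simple graphs if and only if their binding graphs [G] and [H] (both on W = V ⊕ P) are isomorphic as simple graphs. -/
/-! Every basic vertex `inl u` of `[G]` is joined to the `|V| - 1 ≥ 3` binding vertices of the
pairs containing `u`, while every binding vertex has degree exactly `2`. An isomorphism
`[G] ≅ [H]` therefore maps basic vertices onto basic vertices, and since `[G]` restricted to
them is `G`, it restricts to an isomorphism `G ≅ H`. Conversely, an isomorphism `G ≅ H` extends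
to the binding vertices by acting on pairs. -/

namespace Binding

/-- The diamond product of a labeling: the multiset of 2-d-walk label pairs. -/
def diamond {V L : Type*} [Fintype V] (X : V → V → L) : V → V → Multiset (L × L) :=
  fun u v => Finset.univ.val.map fun k => (X u k, X k v)

/-- A labeling recognizes vertices if diagonal labels never coincide with
off-diagonal labels. -/
def RecognizesVertices {V L : Type*} (X : V → V → L) : Prop :=
  ∀ i u v : V, u ≠ v → X i i ≠ X u v

/-- `Y` refines `X` if equal `Y`-labels imply equal `X`-labels. -/
def Refines {V L L' : Type*} (Y : V → V → L') (X : V → V → L) : Prop :=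
  ∀ u v r s : V, Y u v = Y r s → X u v = X r s

/-- A labeling is stable if labels agree exactly when their diamond products agree. -/
def Stable {V L : Type*} [Fintype V] (X : V → V → L) : Prop :=
  ∀ u v r s : V, X u v = X r s ↔ diamond X u v = diamond X r s

/-- The type of unordered pairs of distinct vertices of `V`. -/
abbrev Pairs (V : Type*) : Type _ := {s : Finset V // s.card = 2}

/-- The binding graph of a simple graph `G`: each pair of distinct basic
vertices gets a fresh binding vertex adjacent exactly to the two of them. -/
def bindingGraph {V : Type*} (G : SimpleGraph V) : SimpleGraph (V ⊕ Pairs V) where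
  Adj a b :=
    match a, b with
    | Sum.inl u, Sum.inl v => G.Adj u v
    | Sum.inl u, Sum.inr p => u ∈ p.val
    | Sum.inr p, Sum.inl u => u ∈ p.val
    | Sum.inr _, Sum.inr _ => False
  symm := by
    refine ⟨?_⟩
    rintro (u | p) (v | q) h
    · exact G.adj_symm h
    · exact h
    · exact h
    · exact h
  loopless := by
    refine ⟨?_⟩
    rintro (u | p) h
    · exact G.irrefl h
    · exact h

open SimpleGraph

section

variable {V W : Type*}

def _root_.SimpleGraph.Iso.comapInl {α β α' β' : Type*} {G : SimpleGraph (α ⊕ β)}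
    {H : SimpleGraph (α' ⊕ β')} (φ : G ≃g H) (hφ : ∀ x, (φ x).isLeft = x.isLeft) :
    G.comap Sum.inl ≃g H.comap Sum.inl where
  toEquiv := Equiv.sumIsLeft.symm.trans
    ((φ.toEquiv.subtypeEquiv fun x => by simp [hφ]).trans Equiv.sumIsLeft)
  map_rel_iff' {a b} := by
    simp only [comap_adj, Equiv.trans_apply, Equiv.sumIsLeft_apply, Equiv.sumIsLeft_symm_apply_coe,
      Equiv.subtypeEquiv_apply, Sum.inl_getLeft]
    exact φ.map_rel_iff

def Pairs.congr (e : V ≃ W) : Pairs V ≃ Pairs W :=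
  (Equiv.finsetCongr e).subtypeEquiv fun s => by simp

def _root_.SimpleGraph.Iso.bindingGraph {G : SimpleGraph V} {H : SimpleGraph W} (e : G ≃g H) :
    bindingGraph G ≃g bindingGraph H where
  toEquiv := e.toEquiv.sumCongr (Pairs.congr e.toEquiv)
  map_rel_iff' := by
    rintro (u | p) (v | q)
    · exact e.map_rel_iff
    · exact Finset.mem_map' e.toEquiv.toEmbedding
    · exact Finset.mem_map' e.toEquiv.toEmbedding
    · exact Iff.rfl

lemma neighborSet_inr (G : SimpleGraph V) (p : Pairs V) :
    (bindingGraph G).neighborSet (.inr p) = Sum.inl '' (p.val : Set V) := by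
  ext (v | q) <;> simp [SimpleGraph.neighborSet, bindingGraph]

lemma card_neighborSet_inr (G : SimpleGraph V) (p : Pairs V) :
    Nat.card ((bindingGraph G).neighborSet (.inr p)) = 2 := by
  rw [Nat.card_coe_set_eq, neighborSet_inr, Set.ncard_image_of_injective _ Sum.inl_injective,
    Set.ncard_coe_finset, p.2]

lemma card_sub_one_le_card_neighborSet_inl [Fintype V] (G : SimpleGraph V) (u : V) :
    Fintype.card V - 1 ≤ Nat.card ((bindingGraph G).neighborSet (.inl u)) := by
  classical
  let pairWith (x : {x : V // x ≠ u}) : (bindingGraph G).neighborSet (.inl u) :=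
    ⟨.inr ⟨{u, x.1}, Finset.card_pair x.2.symm⟩, Finset.mem_insert_self u {x.1}⟩
  have : Function.Injective pairWith := by
    rintro ⟨x, hx⟩ ⟨y, _⟩ h
    have hxy : ({u, x} : Finset V) = {u, y} := by
      simpa [pairWith] using congrArg Subtype.val h
    have : x ∈ ({u, y} : Finset V) := hxy ▸ by simp
    simpa [hx] using this
  calc Fintype.card V - 1 = Nat.card {x : V // x ≠ u} := by
        rw [Nat.card_eq_fintype_card, ← Set.card_ne_eq u]; rfl
    _ ≤ _ := Nat.card_le_card_of_injective pairWith this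

lemma isLeft_iff_three_le_card_neighborSet [Fintype V] {G : SimpleGraph V}
    (hV : 4 ≤ Fintype.card V) (x : V ⊕ Pairs V) :
    x.isLeft ↔ 3 ≤ Nat.card ((bindingGraph G).neighborSet x) := by
  cases x with
  | inl u => simpa using (card_sub_one_le_card_neighborSet_inl G u).trans' (by omega)
  | inr p => rw [card_neighborSet_inr]; simp

lemma isLeft_bindingGraphIso_apply [Fintype V] [Fintype W] {G : SimpleGraph V}
    {H : SimpleGraph W} (hV : 4 ≤ Fintype.card V) (hW : 4 ≤ Fintype.card W)
    (φ : bindingGraph G ≃g bindingGraph H) (x : V ⊕ Pairs V) : (φ x).isLeft = x.isLeft := by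
  rw [Bool.eq_iff_iff, isLeft_iff_three_le_card_neighborSet hV,
    isLeft_iff_three_le_card_neighborSet hW, Nat.card_congr (φ.mapNeighborSet x)]

end

theorem iso_iff_bindingGraph_iso_general
    {V : Type*} [Fintype V] (G H : SimpleGraph V)
    (hcard : 4 ≤ Fintype.card V) :
    Nonempty (G ≃g H) ↔ Nonempty (bindingGraph G ≃g bindingGraph H) :=
  ⟨fun ⟨e⟩ => ⟨e.bindingGraph⟩,
    -- `(bindingGraph G).comap Sum.inl` is `G` by definition
    fun ⟨φ⟩ => ⟨φ.comapInl (isLeft_bindingGraphIso_apply hcard hcard φ)⟩⟩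

/-- two simple graphs are isomorphic iff their binding graphs
are isomorphic. -/
theorem iso_iff_bindingGraph_iso
    {V : Type*} [Fintype V] [DecidableEq V] (G H : SimpleGraph V)
    (hcard : 4 ≤ Fintype.card V) :
    Nonempty (G ≃g H) ↔ Nonempty (bindingGraph G ≃g bindingGraph H) :=
  iso_iff_bindingGraph_iso_general G H hcard

end Binding
end

section
/- Let G be a simple graph on a finite vertex set V with |V| ≥ 4, let [G] be its binding graph on W = V ⊕ P, and let M be any stable vertex-recognizing refinement of [G]. Then no basic vertex shares a cell with a binding vertex: M(inl u, inl u) ≠ M(inr p, inr p) for all u ∈ V and p ∈ P. -/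
/-!
In a stable labeling that recognizes vertices and respects adjacency, the diagonal label of `w`
determines the degree of `w`: it counts the entries `(M w k, M k w)` of the diamond product at
`(w, w)` whose first label is an edge label. A binding vertex has degree 2, whereas a basic vertex
`u` is adjacent to the `|V| - 1 ≥ 3` binding vertices `{u, v}`.
-/

namespace Binding

/-- A labeling is a stable vertex-recognizing refinement of a simple graph if it
is stable, recognizes vertices, and equal off-diagonal labels agree on
adjacency. -/
def IsSVRRefinement {W L : Type*} [Fintype W] (H : SimpleGraph W) (M : W → W → L) : Prop :=
  Stable M ∧ RecognizesVertices M ∧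
    ∀ u v r s : W, u ≠ v → r ≠ s → M u v = M r s → (H.Adj u v ↔ H.Adj r s)

namespace IsSVRRefinement

variable {W L : Type*} [Fintype W] {H : SimpleGraph W} {M : W → W → L}

/-- A diagonal label is never the label of an edge, and off-diagonal labels determine adjacency. -/
theorem adj_iff_exists_adj_label_eq (hM : IsSVRRefinement H M) (w k : W) :
    H.Adj w k ↔ ∃ x y, H.Adj x y ∧ M x y = M w k := by
  refine ⟨fun h => ⟨w, k, h, rfl⟩, ?_⟩
  rintro ⟨x, y, hxy, hlabel⟩
  obtain rfl | hwk := eq_or_ne w k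
  · exact absurd hlabel.symm (hM.2.1 w x y hxy.ne)
  · exact (hM.2.2 w k x y hwk hxy.ne hlabel.symm).mpr hxy

open Classical in
theorem degree_eq_countP_diamond [DecidableRel H.Adj] (hM : IsSVRRefinement H M) (w : W) :
    H.degree w = (diamond M w w).countP fun ab => ∃ x y, H.Adj x y ∧ M x y = ab.1 := by
  rw [diamond, Multiset.countP_map, ← SimpleGraph.card_neighborFinset_eq_degree,
    SimpleGraph.neighborFinset_eq_filter, Finset.card_def, Finset.filter_val]
  congr 1
  exact Multiset.filter_congr fun k _ => hM.adj_iff_exists_adj_label_eq w k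

theorem degree_eq_of_diag_eq [DecidableRel H.Adj] (hM : IsSVRRefinement H M) {w w' : W}
    (h : M w w = M w' w') : H.degree w = H.degree w' := by
  rw [hM.degree_eq_countP_diamond, hM.degree_eq_countP_diamond, (hM.1 w w w' w').mp h]

end IsSVRRefinement

section bindingGraph

variable {V : Type*} [Fintype V] (G : SimpleGraph V) [DecidableRel (bindingGraph G).Adj]

theorem bindingGraph_neighborFinset_inr (p : Pairs V) :
    (bindingGraph G).neighborFinset (Sum.inr p) = p.val.map Function.Embedding.inl := by
  ext (v | q) <;> rw [SimpleGraph.mem_neighborFinset] <;> simp [bindingGraph]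

theorem bindingGraph_degree_inr (p : Pairs V) : (bindingGraph G).degree (Sum.inr p) = 2 := by
  rw [← SimpleGraph.card_neighborFinset_eq_degree, bindingGraph_neighborFinset_inr,
    Finset.card_map, p.2]

theorem card_sub_one_le_bindingGraph_degree_inl (u : V) :
    Fintype.card V - 1 ≤ (bindingGraph G).degree (Sum.inl u) := by
  classical
  let binder : {v // v ≠ u} → (bindingGraph G).neighborSet (Sum.inl u) := fun v =>
    ⟨Sum.inr ⟨{u, v.1}, Finset.card_pair v.2.symm⟩, Finset.mem_insert_self u {v.1}⟩
  have binder_injective : Function.Injective binder := by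
    rintro ⟨v, hv⟩ ⟨w, hw⟩ h
    have hpair : ({u, v} : Finset V) = {u, w} :=
      Subtype.mk.inj (Sum.inr_injective (Subtype.mk.inj h))
    have : v ∈ ({u, w} : Finset V) := hpair ▸ Finset.mem_insert_of_mem (Finset.mem_singleton_self v)
    simpa [hv] using this
  calc Fintype.card V - 1 = Fintype.card {v // v ≠ u} := by
        rw [Fintype.card_subtype_compl, Fintype.card_subtype_eq]
    _ ≤ Fintype.card ((bindingGraph G).neighborSet (Sum.inl u)) :=
        Fintype.card_le_of_injective binder binder_injective
    _ = (bindingGraph G).degree (Sum.inl u) := SimpleGraph.card_neighborSet_eq_degree _ _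

end bindingGraph

theorem basic_ne_binding_cell_general
    {V L : Type*} [Fintype V] (G : SimpleGraph V)
    (hcard : 4 ≤ Fintype.card V)
    (M : (V ⊕ Pairs V) → (V ⊕ Pairs V) → L)
    (hM : IsSVRRefinement (bindingGraph G) M)
    (u : V) (p : Pairs V) :
    M (Sum.inl u) (Sum.inl u) ≠ M (Sum.inr p) (Sum.inr p) := by
  classical
  intro h
  have hdeg := hM.degree_eq_of_diag_eq h
  have hbasic := card_sub_one_le_bindingGraph_degree_inl G u
  rw [bindingGraph_degree_inr] at hdeg
  omega

/-- in any stable vertex-recognizing refinement of a binding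
graph (with at least 4 basic vertices), no basic vertex shares a cell with a
binding vertex. -/
theorem basic_ne_binding_cell
    {V L : Type*} [Fintype V] [DecidableEq V] (G : SimpleGraph V)
    (hcard : 4 ≤ Fintype.card V)
    (M : (V ⊕ Pairs V) → (V ⊕ Pairs V) → L)
    (hM : IsSVRRefinement (bindingGraph G) M)
    (u : V) (p : Pairs V) :
    M (Sum.inl u) (Sum.inl u) ≠ M (Sum.inr p) (Sum.inr p) :=
  basic_ne_binding_cell_general G hcard M hM u p

end Binding
end
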